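/- Let ν be real and let n be a nonnegative integer. Then the function φ_0(z) = z^n (1−|z|²)^ν on the open unit disk D satisfies 𝔏_ν φ_0 = ν φ_0 on D. -/

import Mathlib

/-!
Write `ρ = 1 - |z|²`. By the Leibniz rule, holomorphy of `zⁿ` and `∂ρ = -z̄`, `∂̄ρ = -z`, the
function `zⁿ ρ^ν` has `∂̄(zⁿ ρ^ν) = -ν zⁿ⁺¹ ρ^(ν-1)`, again of the same shape, so the mixed
derivative is explicit as well. Substituting into `𝔏_ν` and using `z z̄ = 1 - ρ`, all terms
collapse to `ν zⁿ ρ^ν`.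
-/

open MeasureTheory

/-- Wirtinger derivative `∂f/∂z = ½(∂f/∂x − i ∂f/∂y)`. -/
noncomputable def wirtZ (f : ℂ → ℂ) (z : ℂ) : ℂ :=
  (1 / 2 : ℂ) * (fderiv ℝ f z 1 - Complex.I * fderiv ℝ f z Complex.I)

/-- Wirtinger derivative `∂f/∂z̄ = ½(∂f/∂x + i ∂f/∂y)`. -/
noncomputable def wirtZbar (f : ℂ → ℂ) (z : ℂ) : ℂ :=
  (1 / 2 : ℂ) * (fderiv ℝ f z 1 + Complex.I * fderiv ℝ f z Complex.I)

/-- The first order operator `∇_α f = −(1−|z|²) ∂f/∂z + α z̄ f`. -/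
noncomputable def nablaOp (α : ℝ) (f : ℂ → ℂ) (z : ℂ) : ℂ :=
  -(((1 - ‖z‖ ^ 2 : ℝ)) : ℂ) * wirtZ f z + (α : ℂ) * (starRingEnd ℂ z) * f z

/-- The formal adjoint `∇_α^* f = (1−|z|²) ∂f/∂z̄ + (α+1) z f`. -/
noncomputable def nablaStar (α : ℝ) (f : ℂ → ℂ) (z : ℂ) : ℂ :=
  (((1 - ‖z‖ ^ 2 : ℝ)) : ℂ) * wirtZbar f z + ((α : ℂ) + 1) * z * f z

/-- The magnetic Laplacian `L_ν`. -/
noncomputable def magL (ν : ℝ) (f : ℂ → ℂ) (z : ℂ) : ℂ :=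
  -(((1 - ‖z‖ ^ 2 : ℝ)) : ℂ) ^ 2 * wirtZ (wirtZbar f) z
    - (ν : ℂ) * (((1 - ‖z‖ ^ 2 : ℝ)) : ℂ) *
        (z * wirtZ f z - (starRingEnd ℂ z) * wirtZbar f z)
    + (ν : ℂ) ^ 2 * ((‖z‖ ^ 2 : ℝ) : ℂ) * f z

open Complex ComplexConjugate Filter Topology

section Wirtinger

variable {f g : ℂ → ℂ} {z : ℂ}

theorem HasFDerivAt.wirtZ_eq {L : ℂ →L[ℝ] ℂ} (h : HasFDerivAt f L z) :
    wirtZ f z = (1 / 2 : ℂ) * (L 1 - I * L I) := by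
  rw [wirtZ, h.fderiv]

theorem HasFDerivAt.wirtZbar_eq {L : ℂ →L[ℝ] ℂ} (h : HasFDerivAt f L z) :
    wirtZbar f z = (1 / 2 : ℂ) * (L 1 + I * L I) := by
  rw [wirtZbar, h.fderiv]

theorem wirtZ_congr (h : f =ᶠ[𝓝 z] g) : wirtZ f z = wirtZ g z := by
  rw [wirtZ, wirtZ, h.fderiv_eq]

theorem wirtZ_mul (hf : DifferentiableAt ℝ f z) (hg : DifferentiableAt ℝ g z) :
    wirtZ (fun w => f w * g w) z = wirtZ f z * g z + f z * wirtZ g z := by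
  rw [(hf.hasFDerivAt.fun_mul hg.hasFDerivAt).wirtZ_eq, wirtZ, wirtZ]
  simp only [add_apply, smul_apply, smul_eq_mul]
  ring

theorem wirtZbar_mul (hf : DifferentiableAt ℝ f z) (hg : DifferentiableAt ℝ g z) :
    wirtZbar (fun w => f w * g w) z = wirtZbar f z * g z + f z * wirtZbar g z := by
  rw [(hf.hasFDerivAt.fun_mul hg.hasFDerivAt).wirtZbar_eq, wirtZbar, wirtZbar]
  simp only [add_apply, smul_apply, smul_eq_mul]
  ring

theorem wirtZ_const_mul (c : ℂ) (hf : DifferentiableAt ℝ f z) :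
    wirtZ (fun w => c * f w) z = c * wirtZ f z := by
  rw [wirtZ_mul (differentiableAt_const c) hf, wirtZ, fderiv_const_apply]
  simp

theorem HasDerivAt.wirtZ_eq {f' : ℂ} (h : HasDerivAt f f' z) : wirtZ f z = f' := by
  rw [(h.hasFDerivAt.restrictScalars ℝ).wirtZ_eq]
  simp only [ContinuousLinearMap.coe_restrictScalars', ContinuousLinearMap.toSpanSingleton_apply,
    smul_eq_mul, one_mul]
  linear_combination (-f' / 2) * I_sq

theorem HasDerivAt.wirtZbar_eq_zero {f' : ℂ} (h : HasDerivAt f f' z) : wirtZbar f z = 0 := by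
  rw [(h.hasFDerivAt.restrictScalars ℝ).wirtZbar_eq]
  simp only [ContinuousLinearMap.coe_restrictScalars', ContinuousLinearMap.toSpanSingleton_apply,
    smul_eq_mul, one_mul]
  linear_combination (f' / 2) * I_sq

theorem hasFDerivAt_ofReal_comp_norm_sq {h : ℝ → ℝ} {h' : ℝ} (hh : HasDerivAt h h' (‖z‖ ^ 2)) :
    HasFDerivAt (fun w : ℂ => (h (‖w‖ ^ 2) : ℂ))
      (ofRealCLM.comp (h' • (2 • innerSL ℝ z))) z :=
  ofRealCLM.hasFDerivAt.comp z (hh.comp_hasFDerivAt z (hasStrictFDerivAt_norm_sq z).hasFDerivAt)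

theorem HasDerivAt.wirtZ_comp_norm_sq {h : ℝ → ℝ} {h' : ℝ} (hh : HasDerivAt h h' (‖z‖ ^ 2)) :
    wirtZ (fun w : ℂ => (h (‖w‖ ^ 2) : ℂ)) z = h' * conj z := by
  rw [(hasFDerivAt_ofReal_comp_norm_sq hh).wirtZ_eq]
  apply Complex.ext <;> simp <;> ring

theorem HasDerivAt.wirtZbar_comp_norm_sq {h : ℝ → ℝ} {h' : ℝ} (hh : HasDerivAt h h' (‖z‖ ^ 2)) :
    wirtZbar (fun w : ℂ => (h (‖w‖ ^ 2) : ℂ)) z = h' * z := by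
  rw [(hasFDerivAt_ofReal_comp_norm_sq hh).wirtZbar_eq]
  apply Complex.ext <;> simp <;> ring

end Wirtinger

section WeightedPow

noncomputable def weightedPow (m : ℕ) (s : ℝ) (w : ℂ) : ℂ :=
  w ^ m * (((1 - ‖w‖ ^ 2) ^ s : ℝ) : ℂ)

theorem hasDerivAt_one_sub_rpow (s : ℝ) {x : ℝ} (hx : x < 1) :
    HasDerivAt (fun x => (1 - x) ^ s) (-s * (1 - x) ^ (s - 1)) x := by
  convert ((hasDerivAt_id' x).const_sub 1).rpow_const (p := s)
    (Or.inl (sub_ne_zero.2 hx.ne')) using 1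
  ring

variable (m : ℕ) (s : ℝ) {z : ℂ}

theorem hasDerivAt_one_sub_rpow_norm_sq (hz : ‖z‖ < 1) :
    HasDerivAt (fun x => (1 - x) ^ s) (-s * (1 - ‖z‖ ^ 2) ^ (s - 1)) (‖z‖ ^ 2) :=
  hasDerivAt_one_sub_rpow s (pow_lt_one₀ (norm_nonneg z) hz two_ne_zero)

theorem differentiableAt_weightedPow (hz : ‖z‖ < 1) :
    DifferentiableAt ℝ (weightedPow m s) z :=
  ((hasDerivAt_pow m z).differentiableAt.restrictScalars ℝ).mul
    (hasFDerivAt_ofReal_comp_norm_sq (hasDerivAt_one_sub_rpow_norm_sq s hz)).differentiableAt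

theorem wirtZ_weightedPow (hz : ‖z‖ < 1) :
    wirtZ (weightedPow m s) z = m * z ^ (m - 1) * (((1 - ‖z‖ ^ 2) ^ s : ℝ) : ℂ)
      - s * z ^ m * conj z * (((1 - ‖z‖ ^ 2) ^ (s - 1) : ℝ) : ℂ) := by
  have hρ := hasDerivAt_one_sub_rpow_norm_sq s hz
  unfold weightedPow
  rw [wirtZ_mul ((hasDerivAt_pow m z).differentiableAt.restrictScalars ℝ)
    (hasFDerivAt_ofReal_comp_norm_sq hρ).differentiableAt, (hasDerivAt_pow m z).wirtZ_eq,
    hρ.wirtZ_comp_norm_sq]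
  push_cast
  ring

theorem wirtZbar_weightedPow (hz : ‖z‖ < 1) :
    wirtZbar (weightedPow m s) z = -s * weightedPow (m + 1) (s - 1) z := by
  have hρ := hasDerivAt_one_sub_rpow_norm_sq s hz
  unfold weightedPow
  rw [wirtZbar_mul ((hasDerivAt_pow m z).differentiableAt.restrictScalars ℝ)
    (hasFDerivAt_ofReal_comp_norm_sq hρ).differentiableAt, (hasDerivAt_pow m z).wirtZbar_eq_zero,
    hρ.wirtZbar_comp_norm_sq]
  push_cast
  ring

theorem wirtZ_wirtZbar_weightedPow (hz : ‖z‖ < 1) :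
    wirtZ (wirtZbar (weightedPow m s)) z
      = -s * ((m + 1) * z ^ m * (((1 - ‖z‖ ^ 2) ^ (s - 1) : ℝ) : ℂ)
        - (s - 1) * z ^ (m + 1) * conj z * (((1 - ‖z‖ ^ 2) ^ (s - 2) : ℝ) : ℂ)) := by
  have hwirtZbar : wirtZbar (weightedPow m s) =ᶠ[𝓝 z]
      fun w => -s * weightedPow (m + 1) (s - 1) w :=
    eventually_of_mem (Metric.isOpen_ball.mem_nhds (mem_ball_zero_iff.mpr hz)) fun w hw =>
      wirtZbar_weightedPow m s (mem_ball_zero_iff.mp hw)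
  rw [wirtZ_congr hwirtZbar, wirtZ_const_mul _ (differentiableAt_weightedPow _ _ hz),
    wirtZ_weightedPow _ _ hz, sub_sub, one_add_one_eq_two]
  push_cast
  ring

end WeightedPow

theorem magL_ground_state (ν : ℝ) (n : ℕ) :
    ∀ z ∈ Metric.ball (0 : ℂ) 1,
      magL ν (fun w => w ^ n * (((1 - ‖w‖ ^ 2) ^ ν : ℝ) : ℂ)) z
        = (ν : ℂ) * (z ^ n * (((1 - ‖z‖ ^ 2) ^ ν : ℝ) : ℂ)) := by
  intro z hz
  have hz1 : ‖z‖ < 1 := mem_ball_zero_iff.mp hz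
  change magL ν (weightedPow n ν) z = ν * weightedPow n ν z
  rw [magL, wirtZ_wirtZbar_weightedPow n ν hz1, wirtZ_weightedPow n ν hz1,
    wirtZbar_weightedPow n ν hz1]
  unfold weightedPow
  set q := 1 - ‖z‖ ^ 2 with hq_def
  have hq : 0 < q := sub_pos.2 (pow_lt_one₀ (norm_nonneg z) hz1 two_ne_zero)
  set t := q ^ (ν - 2)
  have hq_sub_one : q ^ (ν - 1) = t * q := by
    rw [← Real.rpow_add_one hq.ne']; ring_nf
  have hq_pow : q ^ ν = t * q ^ 2 := by
    rw [← Real.rpow_add_natCast hq.ne']; push_cast; ring_nf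
  have hz_conj : z * conj z = 1 - q := by rw [mul_conj', hq_def]; push_cast; ring
  have hn : (n : ℂ) * z ^ (n - 1) * z = n * z ^ n := by
    rcases n with _ | k
    · simp
    · rw [Nat.add_sub_cancel, pow_succ]; push_cast; ring
  rw [hq_sub_one, hq_pow, show ‖z‖ ^ 2 = 1 - q by rw [hq_def]; ring]
  push_cast
  linear_combination
    (-(ν : ℂ) * (ν - 1) * t * q ^ 2 * z ^ n) * hz_conj + (-(ν : ℂ) * t * q ^ 3) * hn
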